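/- arXiv:1901.05747 — 5 statements merged into one kernel-verified Lean document; each statement's English description precedes it below -/
import Mathlib

section
/- Uplink-downlink duality of TIN-achievable GDoF regions (Theorem 1): the general TIN-achievable GDoF region of the interfering broadcast channel equals that of the dual interfering multiple access channel, i.e. P^IBC⋆ = P^IMAC⋆ (as subsets of ℝ^{2K}). -/
open Finset

/-- Positive part: `(x)⁺ = max {x, 0}`. -/
noncomputable def pplus (x : ℝ) : ℝ := max x 0

/-- Maximum over all pairs `(l, j)` with `j ≠ k` of `f j l`. -/
noncomputable def crossMax {K : ℕ} (hK : 2 ≤ K) (k : Fin K)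
    (f : Fin K → Fin 2 → ℝ) : ℝ :=
  (Finset.univ.filter (fun p : Fin K × Fin 2 => p.1 ≠ k)).sup'
    (by
      haveI : Nontrivial (Fin K) := Fin.nontrivial_iff_two_le.mpr hK
      obtain ⟨j, hj⟩ := exists_ne k
      exact ⟨(j, (0 : Fin 2)), by simp [hj]⟩)
    (fun p => f p.1 p.2)

/-- Minimum over all pairs `(l, j)` with `j ≠ k` of `f j l`. -/
noncomputable def crossMin {K : ℕ} (hK : 2 ≤ K) (k : Fin K)
    (f : Fin K → Fin 2 → ℝ) : ℝ :=
  (Finset.univ.filter (fun p : Fin K × Fin 2 => p.1 ≠ k)).inf'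
    (by
      haveI : Nontrivial (Fin K) := Fin.nontrivial_iff_two_le.mpr hK
      obtain ⟨j, hj⟩ := exists_ne k
      exact ⟨(j, (0 : Fin 2)), by simp [hj]⟩)
    (fun p => f p.1 p.2)

/-- Maximum over all cells `j ≠ i` of `f j`. -/
noncomputable def cellMax {K : ℕ} (hK : 2 ≤ K) (i : Fin K)
    (f : Fin K → ℝ) : ℝ :=
  (Finset.univ.filter (fun j : Fin K => j ≠ i)).sup'
    (by
      haveI : Nontrivial (Fin K) := Fin.nontrivial_iff_two_le.mpr hK
      obtain ⟨j, hj⟩ := exists_ne i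
      exact ⟨j, by simp [hj]⟩)
    f

/-- IBC TIN upper bound on the GDoF of the first-decoded user of cell `k`.
Users are indexed by `Fin 2` (user `0` is UE 1, user `1` is UE 2);
`π k 0` and `π k 1` are the first and second decoded users of cell `k`. -/
noncomputable def ibcBound1 {K : ℕ} (hK : 2 ≤ K) (α : Fin K → Fin K → Fin 2 → ℝ)
    (π : Fin K → Equiv.Perm (Fin 2)) (r : Fin K → Fin 2 → ℝ) (k : Fin K) : ℝ :=
  max 0 (min
    (α k k (π k 0) + r k (π k 0) -
      pplus (max (α k k (π k 0) + r k (π k 1))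
        (crossMax hK k (fun j l => α k j (π k 0) + r j l))))
    (α k k (π k 1) + r k (π k 0) -
      pplus (max (α k k (π k 1) + r k (π k 1))
        (crossMax hK k (fun j l => α k j (π k 1) + r j l)))))

/-- IBC TIN upper bound on the GDoF of the second-decoded user of cell `k`. -/
noncomputable def ibcBound2 {K : ℕ} (hK : 2 ≤ K) (α : Fin K → Fin K → Fin 2 → ℝ)
    (π : Fin K → Equiv.Perm (Fin 2)) (r : Fin K → Fin 2 → ℝ) (k : Fin K) : ℝ :=
  max 0 (α k k (π k 1) + r k (π k 1) -
    pplus (crossMax hK k (fun j l => α k j (π k 1) + r j l)))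

/-- The IBC TIN region `P^IBC_π(r)`. -/
noncomputable def IBCr {K : ℕ} (hK : 2 ≤ K) (α : Fin K → Fin K → Fin 2 → ℝ)
    (π : Fin K → Equiv.Perm (Fin 2)) (r : Fin K → Fin 2 → ℝ) :
    Set (Fin K → Fin 2 → ℝ) :=
  {d | ∀ k : Fin K,
    (0 ≤ d k (π k 0) ∧ d k (π k 0) ≤ ibcBound1 hK α π r k) ∧
    (0 ≤ d k (π k 1) ∧ d k (π k 1) ≤ ibcBound2 hK α π r k)}

/-- The general TIN-achievable GDoF region of the IBC, `P^IBC⋆`. -/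
noncomputable def IBCstar {K : ℕ} (hK : 2 ≤ K) (α : Fin K → Fin K → Fin 2 → ℝ) :
    Set (Fin K → Fin 2 → ℝ) :=
  {d | ∃ π : Fin K → Equiv.Perm (Fin 2), ∃ r : Fin K → Fin 2 → ℝ,
    (∀ k l, r k l ≤ 0) ∧ d ∈ IBCr hK α π r}

/-- IMAC TIN upper bound on the GDoF of user `π k 0` (decoded last) of cell `k`. -/
noncomputable def imacBound1 {K : ℕ} (hK : 2 ≤ K) (α : Fin K → Fin K → Fin 2 → ℝ)
    (π : Fin K → Equiv.Perm (Fin 2)) (r : Fin K → Fin 2 → ℝ) (k : Fin K) : ℝ :=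
  max 0 (α k k (π k 0) + r k (π k 0) -
    pplus (crossMax hK k (fun j l => α j k l + r j l)))

/-- IMAC TIN upper bound on the GDoF of user `π k 1` of cell `k`. -/
noncomputable def imacBound2 {K : ℕ} (hK : 2 ≤ K) (α : Fin K → Fin K → Fin 2 → ℝ)
    (π : Fin K → Equiv.Perm (Fin 2)) (r : Fin K → Fin 2 → ℝ) (k : Fin K) : ℝ :=
  max 0 (α k k (π k 1) + r k (π k 1) -
    pplus (max (α k k (π k 0) + r k (π k 0))
      (crossMax hK k (fun j l => α j k l + r j l))))

/-- The IMAC TIN region `P^IMAC_π(r̄)`. -/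
noncomputable def IMACr {K : ℕ} (hK : 2 ≤ K) (α : Fin K → Fin K → Fin 2 → ℝ)
    (π : Fin K → Equiv.Perm (Fin 2)) (r : Fin K → Fin 2 → ℝ) :
    Set (Fin K → Fin 2 → ℝ) :=
  {d | ∀ k : Fin K,
    (0 ≤ d k (π k 0) ∧ d k (π k 0) ≤ imacBound1 hK α π r k) ∧
    (0 ≤ d k (π k 1) ∧ d k (π k 1) ≤ imacBound2 hK α π r k)}

/-- The general TIN-achievable GDoF region of the IMAC, `P^IMAC⋆`. -/
noncomputable def IMACstar {K : ℕ} (hK : 2 ≤ K) (α : Fin K → Fin K → Fin 2 → ℝ) :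
    Set (Fin K → Fin 2 → ℝ) :=
  {d | ∃ π : Fin K → Equiv.Perm (Fin 2), ∃ r : Fin K → Fin 2 → ℝ,
    (∀ k l, r k l ≤ 0) ∧ d ∈ IMACr hK α π r}

/-- `betaD hK α π r k l = β_k^{[π_k(l+1)]}`, indexed by decoding position `l : Fin 2`. -/
noncomputable def betaD {K : ℕ} (hK : 2 ≤ K) (α : Fin K → Fin K → Fin 2 → ℝ)
    (π : Fin K → Equiv.Perm (Fin 2)) (r : Fin K → Fin 2 → ℝ)
    (k : Fin K) (l : Fin 2) : ℝ :=
  if l = 0 then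
    min
      (min (min (α k k (π k 0)) (-(r k (π k 1))))
        (α k k (π k 0) - crossMax hK k (fun j l' => α k j (π k 0) + r j l')))
      (min (min (α k k (π k 1)) (-(r k (π k 1))))
        (α k k (π k 1) - crossMax hK k (fun j l' => α k j (π k 1) + r j l')))
  else
    min (α k k (π k 1))
      (α k k (π k 1) - crossMax hK k (fun j l' => α k j (π k 1) + r j l'))

/-- The dual uplink power allocation `r̄_k^{[π_k(l)]} = −α_{kk}^{[π_k(l)]} + β_k^{[π_k(l)]}`,
expressed as a function of the user index `u`. -/
noncomputable def rbarDual {K : ℕ} (hK : 2 ≤ K) (α : Fin K → Fin K → Fin 2 → ℝ)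
    (π : Fin K → Equiv.Perm (Fin 2)) (r : Fin K → Fin 2 → ℝ)
    (k : Fin K) (u : Fin 2) : ℝ :=
  -α k k u + betaD hK α π r k ((π k).symm u)

/-- `gammaD hK α π r k l = γ_k^{[π_k(l+1)]}`, indexed by decoding position `l : Fin 2`. -/
noncomputable def gammaD {K : ℕ} (hK : 2 ≤ K) (α : Fin K → Fin K → Fin 2 → ℝ)
    (π : Fin K → Equiv.Perm (Fin 2)) (r : Fin K → Fin 2 → ℝ)
    (k : Fin K) (l : Fin 2) : ℝ :=
  if l = 0 then
    max 0 (crossMax hK k (fun j l' => α j k l' + r j l'))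
  else
    max (max 0 (α k k (π k 0) + r k (π k 0)))
      (crossMax hK k (fun j l' => α j k l' + r j l'))

/-- `γ_j^{[u]}` indexed by the user index `u`. -/
noncomputable def gammaU {K : ℕ} (hK : 2 ≤ K) (α : Fin K → Fin K → Fin 2 → ℝ)
    (π : Fin K → Equiv.Perm (Fin 2)) (r : Fin K → Fin 2 → ℝ)
    (j : Fin K) (u : Fin 2) : ℝ :=
  gammaD hK α π r j ((π j).symm u)

section AuxDuality

lemma pplus_nonneg' (x : ℝ) : 0 ≤ pplus x := le_max_right x 0

lemma le_pplus' (x : ℝ) : x ≤ pplus x := le_max_left x 0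

lemma pplus_le' {x c : ℝ} (h : x ≤ c) (h0 : 0 ≤ c) : pplus x ≤ c := max_le h h0

lemma fin2_cases' (u : Fin 2) : u = 0 ∨ u = 1 := by
  fin_cases u <;> decide

lemma crossMax_le' {K : ℕ} (hK : 2 ≤ K) (k : Fin K) {f : Fin K → Fin 2 → ℝ} {c : ℝ}
    (h : ∀ j, j ≠ k → ∀ l, f j l ≤ c) : crossMax hK k f ≤ c := by
  apply Finset.sup'_le
  rintro ⟨j, l⟩ hp
  exact h j (by simpa using (Finset.mem_filter.mp hp).2) l

lemma le_crossMax' {K : ℕ} (hK : 2 ≤ K) {k j : Fin K} (l : Fin 2)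
    (f : Fin K → Fin 2 → ℝ) (h : j ≠ k) : f j l ≤ crossMax hK k f :=
  Finset.le_sup' (fun p : Fin K × Fin 2 => f p.1 p.2)
    (show (j, l) ∈ Finset.univ.filter (fun p : Fin K × Fin 2 => p.1 ≠ k) by simp [h])

variable {K : ℕ} (hK : 2 ≤ K) (α : Fin K → Fin K → Fin 2 → ℝ)
  (π : Fin K → Equiv.Perm (Fin 2)) (r : Fin K → Fin 2 → ℝ)

lemma betaD_le_diag (k : Fin K) (l : Fin 2) :
    betaD hK α π r k l ≤ α k k (π k l) := by
  unfold betaD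
  rcases fin2_cases' l with h | h <;> rw [h]
  · rw [if_pos rfl]
    exact le_trans (min_le_left _ _) (le_trans (min_le_left _ _) (min_le_left _ _))
  · rw [if_neg (by decide : ¬(1 : Fin 2) = 0)]
    exact min_le_left _ _

lemma betaD_le_row (k : Fin K) (l : Fin 2) :
    betaD hK α π r k l ≤
      α k k (π k l) - crossMax hK k (fun j l' => α k j (π k l) + r j l') := by
  unfold betaD
  rcases fin2_cases' l with h | h <;> rw [h]
  · rw [if_pos rfl]
    exact le_trans (min_le_left _ _) (min_le_right _ _)
  · rw [if_neg (by decide : ¬(1 : Fin 2) = 0)]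
    exact min_le_right _ _

lemma betaD0_le_negr (k : Fin K) :
    betaD hK α π r k 0 ≤ -(r k (π k 1)) := by
  unfold betaD
  rw [if_pos rfl]
  exact le_trans (min_le_left _ _) (le_trans (min_le_left _ _) (min_le_right _ _))

lemma cross1 {k j : Fin K} (hj : j ≠ k) (l l' : Fin 2) :
    α j k l + rbarDual hK α π r j l ≤ -(r k l') := by
  unfold rbarDual
  have hterm : α j k l + r k l' ≤ crossMax hK j (fun m l'' => α j m l + r m l'') :=
    le_crossMax' hK l' (fun m l'' => α j m l + r m l'') (Ne.symm hj)
  have hrow := betaD_le_row hK α π r j ((π j).symm l)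
  rw [Equiv.apply_symm_apply] at hrow
  linarith

lemma ibc_subset_imac : IBCstar hK α ⊆ IMACstar hK α := by
  intro d hd
  simp only [IBCstar, Set.mem_setOf_eq] at hd
  obtain ⟨π, r, hr, hd⟩ := hd
  simp only [IBCr, Set.mem_setOf_eq] at hd
  simp only [IMACstar, Set.mem_setOf_eq]
  refine ⟨π, rbarDual hK α π r, ?_, ?_⟩
  · intro k u
    unfold rbarDual
    have h := betaD_le_diag hK α π r k ((π k).symm u)
    rw [Equiv.apply_symm_apply] at h
    linarith
  · simp only [IMACr, Set.mem_setOf_eq]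
    intro k
    obtain ⟨⟨hd0, hb1⟩, hd1, hb2⟩ := hd k
    have hid0 : α k k (π k 0) + rbarDual hK α π r k (π k 0) = betaD hK α π r k 0 := by
      unfold rbarDual
      rw [Equiv.symm_apply_apply]
      ring
    have hid1 : α k k (π k 1) + rbarDual hK α π r k (π k 1) = betaD hK α π r k 1 := by
      unfold rbarDual
      rw [Equiv.symm_apply_apply]
      ring
    have hZ0 : crossMax hK k (fun j l => α j k l + rbarDual hK α π r j l)
        ≤ -(r k (π k 0)) :=
      crossMax_le' hK k (fun j hj l => cross1 hK α π r hj l (π k 0))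
    have hZ1 : crossMax hK k (fun j l => α j k l + rbarDual hK α π r j l)
        ≤ -(r k (π k 1)) :=
      crossMax_le' hK k (fun j hj l => cross1 hK α π r hj l (π k 1))
    have hpZ0 : pplus (crossMax hK k (fun j l => α j k l + rbarDual hK α π r j l))
        ≤ -(r k (π k 0)) := pplus_le' hZ0 (by linarith [hr k (π k 0)])
    constructor
    · refine ⟨hd0, hb1.trans ?_⟩
      unfold ibcBound1 imacBound1
      rw [hid0]
      set X0 := crossMax hK k (fun j l => α k j (π k 0) + r j l) with hX0def
      set X1 := crossMax hK k (fun j l => α k j (π k 1) + r j l) with hX1def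
      set Zc := crossMax hK k (fun j l => α j k l + rbarDual hK α π r j l) with hZcdef
      refine max_le_max le_rfl ?_
      refine le_trans ?_ (show betaD hK α π r k 0 + r k (π k 0)
        ≤ betaD hK α π r k 0 - pplus Zc by linarith)
      rw [← sub_le_iff_le_add]
      have hm0 := min_le_left
        (α k k (π k 0) + r k (π k 0) - pplus (max (α k k (π k 0) + r k (π k 1)) X0))
        (α k k (π k 1) + r k (π k 0) - pplus (max (α k k (π k 1) + r k (π k 1)) X1))
      have hm1 := min_le_right
        (α k k (π k 0) + r k (π k 0) - pplus (max (α k k (π k 0) + r k (π k 1)) X0))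
        (α k k (π k 1) + r k (π k 0) - pplus (max (α k k (π k 1) + r k (π k 1)) X1))
      have hq0 := pplus_nonneg' (max (α k k (π k 0) + r k (π k 1)) X0)
      have hq1 := pplus_nonneg' (max (α k k (π k 1) + r k (π k 1)) X1)
      have hp0a : α k k (π k 0) + r k (π k 1)
          ≤ pplus (max (α k k (π k 0) + r k (π k 1)) X0) :=
        (le_max_left _ _).trans (le_pplus' _)
      have hp0b : X0 ≤ pplus (max (α k k (π k 0) + r k (π k 1)) X0) :=
        (le_max_right _ _).trans (le_pplus' _)
      have hp1a : α k k (π k 1) + r k (π k 1)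
          ≤ pplus (max (α k k (π k 1) + r k (π k 1)) X1) :=
        (le_max_left _ _).trans (le_pplus' _)
      have hp1b : X1 ≤ pplus (max (α k k (π k 1) + r k (π k 1)) X1) :=
        (le_max_right _ _).trans (le_pplus' _)
      unfold betaD
      rw [if_pos rfl, ← hX0def, ← hX1def]
      simp only [le_min_iff]
      refine ⟨⟨⟨?_, ?_⟩, ?_⟩, ⟨⟨?_, ?_⟩, ?_⟩⟩ <;> linarith
    · refine ⟨hd1, hb2.trans ?_⟩
      unfold ibcBound2 imacBound2
      rw [hid0, hid1]
      set X1 := crossMax hK k (fun j l => α k j (π k 1) + r j l) with hX1def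
      set Zc := crossMax hK k (fun j l => α j k l + rbarDual hK α π r j l) with hZcdef
      refine max_le_max le_rfl ?_
      have hβb : betaD hK α π r k 0 ≤ -(r k (π k 1)) := betaD0_le_negr hK α π r k
      have hpm : pplus (max (betaD hK α π r k 0) Zc) ≤ -(r k (π k 1)) :=
        pplus_le' (max_le hβb hZ1) (by linarith [hr k (π k 1)])
      have h2 : α k k (π k 1) + r k (π k 1) - pplus X1 - r k (π k 1)
          ≤ betaD hK α π r k 1 := by
        unfold betaD
        rw [if_neg (by decide : ¬(1 : Fin 2) = 0), ← hX1def]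
        exact le_min (by linarith [pplus_nonneg' X1]) (by linarith [le_pplus' X1])
      linarith

lemma gammaD_nonneg' (k : Fin K) (l : Fin 2) : 0 ≤ gammaD hK α π r k l := by
  unfold gammaD
  rcases fin2_cases' l with h | h <;> rw [h]
  · rw [if_pos rfl]
    exact le_max_left 0 _
  · rw [if_neg (by decide : ¬(1 : Fin 2) = 0)]
    exact le_trans (le_max_left 0 _) (le_max_left _ _)

lemma crossMax_le_gammaD (k : Fin K) (l : Fin 2) :
    crossMax hK k (fun j l' => α j k l' + r j l') ≤ gammaD hK α π r k l := by
  unfold gammaD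
  rcases fin2_cases' l with h | h <;> rw [h]
  · rw [if_pos rfl]
    exact le_max_right _ _
  · rw [if_neg (by decide : ¬(1 : Fin 2) = 0)]
    exact le_max_right _ _

lemma cross2 {k j : Fin K} (hj : j ≠ k) (l u : Fin 2) :
    α k j u + -(gammaU hK α π r j l) ≤ -(r k u) := by
  have h1 : α k j u + r k u ≤ crossMax hK j (fun m l' => α m j l' + r m l') :=
    le_crossMax' hK u (fun m l' => α m j l' + r m l') (Ne.symm hj)
  have h2 : crossMax hK j (fun m l' => α m j l' + r m l') ≤ gammaU hK α π r j l := by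
    unfold gammaU
    exact crossMax_le_gammaD hK α π r j ((π j).symm l)
  linarith

lemma gammaD0_eq (k : Fin K) :
    gammaD hK α π r k 0 = pplus (crossMax hK k (fun j l => α j k l + r j l)) := by
  unfold gammaD pplus
  rw [if_pos rfl]
  exact max_comm _ _

lemma gammaD1_eq (k : Fin K) :
    gammaD hK α π r k 1 = pplus (max (α k k (π k 0) + r k (π k 0))
      (crossMax hK k (fun j l => α j k l + r j l))) := by
  unfold gammaD pplus
  rw [if_neg (by decide : ¬(1 : Fin 2) = 0)]
  apply le_antisymm
  · exact max_le (max_le (le_max_right _ _) ((le_max_left _ _).trans (le_max_left _ _)))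
      ((le_max_right _ _).trans (le_max_left _ _))
  · exact max_le (max_le ((le_max_right _ _).trans (le_max_left _ _)) (le_max_right _ _))
      ((le_max_left _ _).trans (le_max_left _ _))

lemma imac_subset_ibc : IMACstar hK α ⊆ IBCstar hK α := by
  intro d hd
  simp only [IMACstar, Set.mem_setOf_eq] at hd
  obtain ⟨π, rb, hrb, hd⟩ := hd
  simp only [IMACr, Set.mem_setOf_eq, imacBound1, imacBound2] at hd
  simp only [IBCstar, Set.mem_setOf_eq]
  classical
  set π' : Fin K → Equiv.Perm (Fin 2) := fun k =>
    if gammaD hK α π rb k 1 < α k k (π k 1) + rb k (π k 1) then π k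
    else π k * Equiv.swap 0 1 with hπ'def
  set r' : Fin K → Fin 2 → ℝ := fun j u => -(gammaU hK α π rb j u) with hr'def
  refine ⟨π', r', ?_, ?_⟩
  · intro k u
    simp only [hr'def]
    exact neg_nonpos.mpr (by
      unfold gammaU
      exact gammaD_nonneg' hK α π rb k ((π k).symm u))
  · simp only [IBCr, Set.mem_setOf_eq]
    intro k
    have hg0 : gammaU hK α π rb k (π k 0) = gammaD hK α π rb k 0 := by
      unfold gammaU
      rw [Equiv.symm_apply_apply]
    have hg1 : gammaU hK α π rb k (π k 1) = gammaD hK α π rb k 1 := by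
      unfold gammaU
      rw [Equiv.symm_apply_apply]
    have hW0 : crossMax hK k (fun j l => α k j (π k 0) + -(gammaU hK α π rb j l))
        ≤ -(rb k (π k 0)) :=
      crossMax_le' hK k (fun j hj l => cross2 hK α π rb hj l (π k 0))
    have hW1 : crossMax hK k (fun j l => α k j (π k 1) + -(gammaU hK α π rb j l))
        ≤ -(rb k (π k 1)) :=
      crossMax_le' hK k (fun j hj l => cross2 hK α π rb hj l (π k 1))
    have hpW0 : pplus (crossMax hK k (fun j l => α k j (π k 0) + -(gammaU hK α π rb j l)))
        ≤ -(rb k (π k 0)) := pplus_le' hW0 (by linarith [hrb k (π k 0)])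
    have hpW1 : pplus (crossMax hK k (fun j l => α k j (π k 1) + -(gammaU hK α π rb j l)))
        ≤ -(rb k (π k 1)) := pplus_le' hW1 (by linarith [hrb k (π k 1)])
    have hγ0 := gammaD0_eq hK α π rb k
    have hγ1 := gammaD1_eq hK α π rb k
    have hs0γ1 : α k k (π k 0) + rb k (π k 0) ≤ gammaD hK α π rb k 1 := by
      rw [hγ1]
      exact (le_max_left _ _).trans (le_pplus' _)
    obtain ⟨⟨hd0, hb1⟩, hd1, hb2⟩ := hd k
    by_cases hC : gammaD hK α π rb k 1 < α k k (π k 1) + rb k (π k 1)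
    · have hπ'k : π' k = π k := by
        simp only [hπ'def]
        exact if_pos hC
      simp only [ibcBound1, ibcBound2, hπ'k, hr'def, hg0, hg1]
      refine ⟨⟨hd0, hb1.trans ?_⟩, hd1, hb2.trans ?_⟩
      · refine max_le_max le_rfl ?_
        refine le_min ?_ ?_
        · have hmax : pplus (max (α k k (π k 0) + -(gammaD hK α π rb k 1))
              (crossMax hK k (fun j l => α k j (π k 0) + -(gammaU hK α π rb j l))))
              ≤ -(rb k (π k 0)) :=
            pplus_le' (max_le (by linarith) hW0) (by linarith [hrb k (π k 0)])
          linarith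
        · have hc0 : (0:ℝ) ≤ α k k (π k 1) - (α k k (π k 0) + rb k (π k 0)) := by
            linarith [hrb k (π k 1)]
          have hmax : pplus (max (α k k (π k 1) + -(gammaD hK α π rb k 1))
              (crossMax hK k (fun j l => α k j (π k 1) + -(gammaU hK α π rb j l))))
              ≤ α k k (π k 1) - (α k k (π k 0) + rb k (π k 0)) :=
            pplus_le' (max_le (by linarith) (by linarith)) hc0
          linarith
      · refine max_le_max le_rfl ?_
        linarith
    · have hπ'k : π' k = π k * Equiv.swap 0 1 := by
        simp only [hπ'def]
        exact if_neg hC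
      have hC' := not_lt.mp hC
      simp only [ibcBound1, ibcBound2, hπ'k, Equiv.Perm.mul_apply, Equiv.swap_apply_left,
        Equiv.swap_apply_right, hr'def, hg0, hg1]
      refine ⟨⟨hd1, ?_⟩, hd0, ?_⟩
      · have hz : d k (π k 1) ≤ 0 := by
          refine hb2.trans (max_le le_rfl ?_)
          linarith
        exact hz.trans (le_max_left _ _)
      · refine hb1.trans ?_
        refine max_le_max le_rfl ?_
        linarith

end AuxDuality

/-- **Theorem 1 (uplink–downlink duality under TIN).**
The general TIN-achievable GDoF regions of the IBC and of its dual IMAC coincide. -/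
theorem ibc_imac_duality {K : ℕ} (hK : 2 ≤ K) (α : Fin K → Fin K → Fin 2 → ℝ)
    (hα : ∀ k i l, 0 ≤ α k i l) (hord : ∀ k, α k k 0 ≤ α k k 1) :
    IBCstar hK α = IMACstar hK α := by
  exact Set.Subset.antisymm (ibc_subset_imac hK α) (imac_subset_ibc hK α)
end

section
/- Key power-exponent inequalities in the downlink-to-uplink direction: for every network decoding order π and nonpositive power allocation r, with the dual allocation r̄_k^{[π_k(l)]} = −α_{kk}^{[π_k(l)]} + β_k^{[π_k(l)]}, one has for every cell k: (i) r_k^{[π_k(2)]} ≤ −β_k^{[π_k(1)]}; and (ii) for both l_k ∈ {1,2} and every pair (l_j, j) with j ≠ k, r_k^{[π_k(l_k)]} ≤ −(α_{jk}^{[l_j]} + r̄_j^{[l_j]}). -/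
open Finset

lemma crossMax_ge {K : ℕ} (hK : 2 ≤ K) (k j : Fin K) (hj : j ≠ k) (l : Fin 2)
    (f : Fin K → Fin 2 → ℝ) : f j l ≤ crossMax hK k f :=
  Finset.le_sup' (f := fun p : Fin K × Fin 2 => f p.1 p.2)
    (by simp [hj] : ((j, l) : Fin K × Fin 2) ∈ _)

/-- **Key power-exponent inequalities in the downlink-to-uplink direction.**
With the dual allocation `r̄_k^{[π_k(l)]} = −α_{kk}^{[π_k(l)]} + β_k^{[π_k(l)]}`,
for every cell `k`: (i) `r_k^{[π_k(2)]} ≤ −β_k^{[π_k(1)]}`; and (ii) for both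
`l_k ∈ {1,2}` and every pair `(l_j, j)` with `j ≠ k`,
`r_k^{[π_k(l_k)]} ≤ −(α_{jk}^{[l_j]} + r̄_j^{[l_j]})`. -/
theorem key_power_exponent_ineqs {K : ℕ} (hK : 2 ≤ K) (α : Fin K → Fin K → Fin 2 → ℝ)
    (hα : ∀ k i l, 0 ≤ α k i l) (hord : ∀ k, α k k 0 ≤ α k k 1)
    (π : Fin K → Equiv.Perm (Fin 2)) (r : Fin K → Fin 2 → ℝ)
    (hr : ∀ k l, r k l ≤ 0) :
    ∀ k : Fin K,
      r k (π k 1) ≤ -(betaD hK α π r k 0) ∧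
      ∀ lk : Fin 2, ∀ j : Fin K, j ≠ k → ∀ lj : Fin 2,
        r k (π k lk) ≤ -(α j k lj + rbarDual hK α π r j lj) := by
  intro k
  constructor
  · have h : betaD hK α π r k 0 ≤ -(r k (π k 1)) := by
      unfold betaD
      simp only [if_pos rfl]
      exact le_trans (min_le_left _ _) (le_trans (min_le_left _ _) (min_le_right _ _))
    linarith
  · intro lk j hj lj
    have hcm : α j k lj + r k (π k lk) ≤ crossMax hK j (fun i l' => α j i lj + r i l') :=
      crossMax_ge hK j k (Ne.symm hj) (π k lk) (fun i l' => α j i lj + r i l')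
    set m := (π j).symm lj with hm
    have hlj : π j m = lj := Equiv.apply_symm_apply _ _
    have hbeta : betaD hK α π r j m ≤
        α j j lj - crossMax hK j (fun i l' => α j i lj + r i l') := by
      rcases eq_or_ne m 0 with h0 | h0
      · rw [h0] at hlj ⊢
        unfold betaD
        simp only [if_pos rfl]
        rw [← hlj]
        exact le_trans (min_le_left _ _) (min_le_right _ _)
      · have h1 : m = 1 := by omega
        rw [h1] at hlj ⊢
        unfold betaD
        rw [if_neg (by decide)]
        rw [← hlj]
        exact min_le_right _ _
    have : rbarDual hK α π r j lj ≤ -(α j k lj + r k (π k lk)) := by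
      unfold rbarDual
      rw [← hm]
      linarith
    linarith
end

section
/- Compact form of the IBC TIN region: for every network decoding order π and every nonpositive power allocation r, the region P^IBC_π(r) equals the set of tuples d ∈ ℝ^{2K} such that for every cell k and every l_k ∈ {1,2}: 0 ≤ d_k^{[π_k(l_k)]} ≤ max{0, r_k^{[π_k(l_k)]} + β_k^{[π_k(l_k)]}}. -/
open Finset

lemma sub_pplus_eq (x c : ℝ) : x - pplus c = min x (x - c) := by
  unfold pplus
  rcases le_total c 0 with h | h
  · rw [max_eq_right h, min_eq_left (by linarith)]; ring
  · rw [max_eq_left h, min_eq_right (by linarith)]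

lemma sub_max' (a b c : ℝ) : a - max b c = min (a - b) (a - c) := by
  rcases le_total b c with h | h
  · rw [max_eq_right h, min_eq_right (by linarith)]
  · rw [max_eq_left h, min_eq_left (by linarith)]

lemma key1 (a0 a1 r0 r1 c0 c1 : ℝ) :
    min (a0 + r0 - pplus (max (a0 + r1) c0)) (a1 + r0 - pplus (max (a1 + r1) c1))
      = r0 + min (min (min a0 (-r1)) (a0 - c0)) (min (min a1 (-r1)) (a1 - c1)) := by
  rw [sub_pplus_eq, sub_pplus_eq, sub_max', sub_max', ← min_add_add_left,
      ← min_add_add_left, ← min_add_add_left, ← min_add_add_left,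
      ← min_add_add_left]
  ring_nf
  simp [min_assoc, min_comm, min_left_comm]

lemma key2 (x c : ℝ) : max 0 (x - pplus c) = max 0 (min x (x - c)) := by
  rw [sub_pplus_eq]

/-- **Compact form of the IBC TIN region.**
For every decoding order `π` and nonpositive power allocation `r`, the region
`P^IBC_π(r)` equals the set of tuples `d` with
`0 ≤ d_k^{[π_k(l)]} ≤ max{0, r_k^{[π_k(l)]} + β_k^{[π_k(l)]}}` for every cell `k`
and both positions `l`. -/
theorem ibc_region_compact_form {K : ℕ} (hK : 2 ≤ K) (α : Fin K → Fin K → Fin 2 → ℝ)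
    (hα : ∀ k i l, 0 ≤ α k i l) (hord : ∀ k, α k k 0 ≤ α k k 1)
    (π : Fin K → Equiv.Perm (Fin 2)) (r : Fin K → Fin 2 → ℝ)
    (hr : ∀ k l, r k l ≤ 0) :
    IBCr hK α π r =
      {d | ∀ k : Fin K, ∀ l : Fin 2,
        0 ≤ d k (π k l) ∧ d k (π k l) ≤ max 0 (r k (π k l) + betaD hK α π r k l)} := by
  have hb1 : ∀ k, ibcBound1 hK α π r k = max 0 (r k (π k 0) + betaD hK α π r k 0) := by
    intro k
    unfold ibcBound1 betaD
    simp only [if_pos rfl, if_true]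
    rw [key1]
  have hb2 : ∀ k, ibcBound2 hK α π r k = max 0 (r k (π k 1) + betaD hK α π r k 1) := by
    intro k
    unfold ibcBound2 betaD
    simp only [if_neg (by decide : (1 : Fin 2) ≠ 0)]
    rw [sub_pplus_eq]
    congr 1
    rw [show α k k (π k 1) + r k (π k 1) -
        crossMax hK k (fun j l' => α k j (π k 1) + r j l')
        = r k (π k 1) + (α k k (π k 1) -
          crossMax hK k (fun j l' => α k j (π k 1) + r j l')) by ring]
    rw [show α k k (π k 1) + r k (π k 1) = r k (π k 1) + α k k (π k 1) by ring]
    rw [min_add_add_left]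
  ext d
  simp only [IBCr, Set.mem_setOf_eq]
  constructor
  · intro h k l
    fin_cases l
    · exact ⟨(h k).1.1, (hb1 k) ▸ (h k).1.2⟩
    · exact ⟨(h k).2.1, (hb2 k) ▸ (h k).2.2⟩
  · intro h k
    exact ⟨⟨(h k 0).1, (hb1 k).symm ▸ (h k 0).2⟩, ⟨(h k 1).1, (hb2 k).symm ▸ (h k 1).2⟩⟩
end

section
/- Key cross-cell inequality in the uplink-to-downlink direction: let π be a network decoding order and r̄ a nonpositive power allocation satisfying α_{kk}^{[π_k(2)]} + r̄_k^{[π_k(2)]} ≥ α_{kk}^{[π_k(1)]} + r̄_k^{[π_k(1)]} for every cell k. Then for every cell k, every m ∈ {1,2}, and every pair (l_j, j) with j ≠ k: α_{kk}^{[π_k(m)]} + γ_j^{[l_j]} − α_{kj}^{[π_k(m)]} ≥ α_{kk}^{[π_k(1)]} + r̄_k^{[π_k(1)]}. -/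
open Finset

/-- **Key cross-cell inequality in the uplink-to-downlink direction.**
Under the power ordering assumption, for every cell `k`, every `m ∈ {1,2}`, and
every pair `(l_j, j)` with `j ≠ k`:
`α_{kk}^{[π_k(m)]} + γ_j^{[l_j]} − α_{kj}^{[π_k(m)]} ≥ α_{kk}^{[π_k(1)]} + r̄_k^{[π_k(1)]}`. -/
theorem key_cross_cell_ineq {K : ℕ} (hK : 2 ≤ K) (α : Fin K → Fin K → Fin 2 → ℝ)
    (hα : ∀ k i l, 0 ≤ α k i l) (hord : ∀ k, α k k 0 ≤ α k k 1)
    (π : Fin K → Equiv.Perm (Fin 2)) (rb : Fin K → Fin 2 → ℝ)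
    (hrb : ∀ k l, rb k l ≤ 0)
    (horder : ∀ k : Fin K,
      α k k (π k 0) + rb k (π k 0) ≤ α k k (π k 1) + rb k (π k 1)) :
    ∀ k : Fin K, ∀ m : Fin 2, ∀ j : Fin K, j ≠ k → ∀ lj : Fin 2,
      α k k (π k 0) + rb k (π k 0) ≤
        α k k (π k m) + gammaU hK α π rb j lj - α k j (π k m) := by
  intro k m j hjk lj
  have hcm : α k j (π k m) + rb k (π k m) ≤
      crossMax hK j (fun i l' => α i j l' + rb i l') := by
    have hmem : ((k, π k m) : Fin K × Fin 2) ∈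
        Finset.univ.filter (fun p : Fin K × Fin 2 => p.1 ≠ j) := by
      simp [Ne.symm hjk]
    exact Finset.le_sup' (fun p : Fin K × Fin 2 => α p.1 j p.2 + rb p.1 p.2) hmem
  have hg : crossMax hK j (fun i l' => α i j l' + rb i l') ≤
      gammaU hK α π rb j lj := by
    unfold gammaU gammaD
    split
    · exact le_max_right _ _
    · exact le_max_right _ _
  have hstep : α k k (π k 0) + rb k (π k 0) ≤ α k k (π k m) + rb k (π k m) := by
    fin_cases m
    · exact le_refl _
    · exact horder k
  have := le_trans hcm hg
  linarith
end

section
/- Reduction to ordered power allocations in the IMAC: for every network decoding order π, every nonpositive power allocation r̄, and every tuple d̄ ∈ P^IMAC_π(r̄), there exist a network decoding order π̃ and a nonpositive power allocation r̃ satisfying α_{kk}^{[π̃_k(2)]} + r̃_k^{[π̃_k(2)]} ≥ α_{kk}^{[π̃_k(1)]} + r̃_k^{[π̃_k(1)]} for every cell k, such that d̄ ∈ P^IMAC_π̃(r̃). -/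
open Finset

lemma crossMax_mono {K : ℕ} (hK : 2 ≤ K) (k : Fin K) {f g : Fin K → Fin 2 → ℝ}
    (h : ∀ j l, f j l ≤ g j l) : crossMax hK k f ≤ crossMax hK k g :=
  Finset.sup'_mono_fun (fun p _ => h p.1 p.2)

lemma pplus_mono {x y : ℝ} (h : x ≤ y) : pplus x ≤ pplus y :=
  max_le_max h le_rfl

lemma pplus_max_of_nonpos {a b : ℝ} (ha : a ≤ 0) : pplus (max a b) = pplus b := by
  unfold pplus
  rw [max_assoc]
  exact max_eq_right (ha.trans (le_max_right b 0))

/-- **Reduction to ordered power allocations in the IMAC.**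
Every tuple `d̄ ∈ P^IMAC_π(r̄)` also belongs to `P^IMAC_π̃(r̃)` for some decoding
order `π̃` and nonpositive allocation `r̃` satisfying
`α_{kk}^{[π̃_k(2)]} + r̃_k^{[π̃_k(2)]} ≥ α_{kk}^{[π̃_k(1)]} + r̃_k^{[π̃_k(1)]}` for all `k`. -/
theorem reduction_to_ordered {K : ℕ} (hK : 2 ≤ K) (α : Fin K → Fin K → Fin 2 → ℝ)
    (hα : ∀ k i l, 0 ≤ α k i l) (hord : ∀ k, α k k 0 ≤ α k k 1) :
    ∀ (π : Fin K → Equiv.Perm (Fin 2)) (rb : Fin K → Fin 2 → ℝ)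
      (d : Fin K → Fin 2 → ℝ),
      (∀ k l, rb k l ≤ 0) → d ∈ IMACr hK α π rb →
        ∃ (π' : Fin K → Equiv.Perm (Fin 2)) (r' : Fin K → Fin 2 → ℝ),
          (∀ k l, r' k l ≤ 0) ∧
          (∀ k : Fin K,
            α k k (π' k 0) + r' k (π' k 0) ≤ α k k (π' k 1) + r' k (π' k 1)) ∧
          d ∈ IMACr hK α π' r' := by
  intro π rb d hrb hd
  classical
  have h01 : ∀ k : Fin K, π k 0 ≠ π k 1 := fun k => (π k).injective.ne (by decide)
  set C : Fin K → Prop := fun k =>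
    α k k (π k 0) + rb k (π k 0) ≤ α k k (π k 1) + rb k (π k 1) with hC
  set π' : Fin K → Equiv.Perm (Fin 2) := fun k =>
    if C k then π k else π k * Equiv.swap 0 1 with hπ'
  set r' : Fin K → Fin 2 → ℝ := fun k u =>
    if C k ∨ u ≠ π k 1 then rb k u
    else min (rb k u) (min 0 (α k k (π k 0) + rb k (π k 0)) - α k k u) with hr'
  have hle : ∀ k u, r' k u ≤ rb k u := by
    intro k u
    simp only [hr']
    split_ifs with h
    · exact le_rfl
    · exact min_le_left _ _
  have hcross : ∀ k : Fin K,
      crossMax hK k (fun j l => α j k l + r' j l) ≤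
        crossMax hK k (fun j l => α j k l + rb j l) :=
    fun k => crossMax_mono hK k (fun j l => by linarith [hle j l])
  -- facts per case
  have hπpos : ∀ k, C k → π' k = π k := fun k h => by simp [hπ', h]
  have hπneg0 : ∀ k, ¬ C k → π' k 0 = π k 1 := by
    intro k h
    simp [hπ', h, Equiv.Perm.mul_apply]
  have hπneg1 : ∀ k, ¬ C k → π' k 1 = π k 0 := by
    intro k h
    simp [hπ', h, Equiv.Perm.mul_apply]
  have hr'0 : ∀ k, r' k (π k 0) = rb k (π k 0) := by
    intro k
    simp only [hr']
    exact if_pos (Or.inr (h01 k))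
  have hr'pos : ∀ k u, C k → r' k u = rb k u := by
    intro k u h
    simp only [hr']
    exact if_pos (Or.inl h)
  have hr'neg : ∀ k, ¬ C k → r' k (π k 1) =
      min (rb k (π k 1)) (min 0 (α k k (π k 0) + rb k (π k 0)) - α k k (π k 1)) := by
    intro k h
    simp only [hr']
    rw [if_neg]
    push_neg
    exact ⟨h, rfl⟩
  refine ⟨π', r', fun k u => (hle k u).trans (hrb k u), ?_, ?_⟩
  · -- ordering
    intro k
    by_cases h : C k
    · rw [hπpos k h, hr'pos k (π k 0) h, hr'pos k (π k 1) h]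
      exact h
    · rw [hπneg0 k h, hπneg1 k h, hr'neg k h, hr'0 k]
      have : min (rb k (π k 1)) (min 0 (α k k (π k 0) + rb k (π k 0)) - α k k (π k 1)) ≤
          min 0 (α k k (π k 0) + rb k (π k 0)) - α k k (π k 1) := min_le_right _ _
      have h2 : min 0 (α k k (π k 0) + rb k (π k 0)) ≤ α k k (π k 0) + rb k (π k 0) :=
        min_le_right _ _
      linarith
  · -- membership
    intro k
    obtain ⟨⟨hd0l, hd0u⟩, ⟨hd1l, hd1u⟩⟩ := hd k
    by_cases h : C k
    · rw [hπpos k h]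
      refine ⟨⟨hd0l, ?_⟩, ⟨hd1l, ?_⟩⟩
      · refine hd0u.trans ?_
        unfold imacBound1
        rw [hπpos k h, hr'pos k (π k 0) h]
        exact max_le_max le_rfl (by linarith [pplus_mono (hcross k)])
      · refine hd1u.trans ?_
        unfold imacBound2
        rw [hπpos k h, hr'pos k (π k 0) h, hr'pos k (π k 1) h]
        have : pplus (max (α k k (π k 0) + rb k (π k 0))
            (crossMax hK k fun j l => α j k l + r' j l)) ≤
            pplus (max (α k k (π k 0) + rb k (π k 0))
            (crossMax hK k fun j l => α j k l + rb j l)) :=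
          pplus_mono (max_le_max le_rfl (hcross k))
        exact max_le_max le_rfl (by linarith)
    · have hlt : α k k (π k 1) + rb k (π k 1) < α k k (π k 0) + rb k (π k 0) := by
        have h' := h
        simp only [hC] at h'
        exact not_le.mp h'
      -- in this cell, d k (π k 1) ≤ 0
      have hs1 : α k k (π' k 0) + r' k (π' k 0) ≤ 0 := by
        rw [hπneg0 k h, hr'neg k h]
        have h2 : min (rb k (π k 1)) (min 0 (α k k (π k 0) + rb k (π k 0)) - α k k (π k 1)) ≤
            min 0 (α k k (π k 0) + rb k (π k 0)) - α k k (π k 1) := min_le_right _ _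
        have h3 : min 0 (α k k (π k 0) + rb k (π k 0)) ≤ 0 := min_le_left _ _
        linarith
      have hd1zero : d k (π k 1) ≤ 0 := by
        refine hd1u.trans ?_
        unfold imacBound2
        have hp : α k k (π k 0) + rb k (π k 0) ≤
            pplus (max (α k k (π k 0) + rb k (π k 0))
              (crossMax hK k fun j l => α j k l + rb j l)) :=
          (le_max_left _ _).trans (le_max_left _ _)
        have : α k k (π k 1) + rb k (π k 1) -
            pplus (max (α k k (π k 0) + rb k (π k 0))
              (crossMax hK k fun j l => α j k l + rb j l)) ≤ 0 := by linarith
        simpa using this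
      have hCk : ¬ C k := h
      constructor
      · rw [hπneg0 k hCk]
        exact ⟨hd1l, hd1zero.trans (le_max_left _ _)⟩
      · rw [hπneg1 k hCk]
        refine ⟨hd0l, hd0u.trans ?_⟩
        unfold imacBound1 imacBound2
        rw [hπneg0 k hCk, hπneg1 k hCk, hr'0 k]
        have hkey : pplus (max (α k k (π k 1) + r' k (π k 1))
            (crossMax hK k fun j l => α j k l + r' j l)) =
            pplus (crossMax hK k fun j l => α j k l + r' j l) := by
          refine pplus_max_of_nonpos ?_
          have := hs1
          rwa [hπneg0 k hCk] at this
        rw [hkey]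
        exact max_le_max le_rfl (by linarith [pplus_mono (hcross k)])
end
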